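/- Let d, k be positive integers, let D_val = {g_1, ..., g_k} be a family of k vectors in ℝ^d (validation gradients), and let S be a nonempty finite family of vectors {g(z)}_{z∈S} in ℝ^d (selected gradients). Fix γ > 0 and λ > 0. Define the regularized empirical Fisher matrix I_γ(S) := Σ_{z∈S} g(z) g(z)^T + γ I_d, the regularized total uncertainty G_γ(S) := Σ_{x∈D_val} g(x)^T I_γ(S)^{-1} g(x), and the gradient-coverage surrogate U_λ(S) := Σ_{x∈D_val} max_{z∈S} exp(−λ ‖g(x) − g(z)‖²). Assume (i) bounded gradients: ‖g(v)‖ ≤ L for all v ∈ D_val ∪ S, and (ii) non-degenerate norms: ‖g(v)‖ ≥ m > 0 for all v ∈ D_val ∪ S. Then for every threshold τ ∈ (0, 2m²], G_γ(S) ≤ kL²/γ − ((2m² − τ)² / (4γ²(1 + L²/γ))) · (U_λ(S) − k e^{−λτ}) / (1 − e^{−λτ}). -/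

import Mathlib

/-!
For a validation gradient `v` and any selected gradient `u`, the regularized Fisher matrix
dominates `γ I + u uᵀ`, hence `vᵀ I_γ(S)⁻¹ v ≤ ‖v‖²/γ - ⟪u, v⟫²/(γ (γ + ‖u‖²))`. If `v` is
covered, i.e. `‖v - u‖² ≤ τ` for some `u`, then `2⟪u, v⟫ ≥ 2m² - τ ≥ 0`, so the term of `v` in
`G_γ(S)` lies at least `Δ = (2m² - τ)² / (4γ(γ + L²))` below `L²/γ`; if `v` is not covered, its
coverage term is at most `e^{-λτ}`, and it is at most `1` in any case. With `N` covered points,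
`G_γ(S) ≤ kL²/γ - ΔN` and `U_λ(S) ≤ k e^{-λτ} + N (1 - e^{-λτ})`; eliminating `N` gives the bound.
-/

open Matrix

section
variable {n ι : Type*} [Fintype n] [DecidableEq n] [Fintype ι]

def regularizedFisher (g : ι → n → ℝ) (γ : ℝ) : Matrix n n ℝ :=
  ∑ z, vecMulVec (g z) (g z) + γ • 1

theorem dotProduct_regularizedFisher_mulVec (g : ι → n → ℝ) (γ : ℝ) (w : n → ℝ) :
    w ⬝ᵥ (regularizedFisher g γ *ᵥ w) = ∑ z, (g z ⬝ᵥ w) ^ 2 + γ * (w ⬝ᵥ w) := by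
  simp [regularizedFisher, add_mulVec, sum_mulVec, vecMulVec_mulVec, sum_dotProduct, smul_mulVec,
    dotProduct_comm w, sq]

theorem regularizedFisher_posDef (g : ι → n → ℝ) {γ : ℝ} (hγ : 0 < γ) :
    (regularizedFisher g γ).PosDef :=
  PosDef.posSemidef_add
    (Matrix.posSemidef_sum _ fun z _ => by simpa using posSemidef_vecMulVec_self_star (g z))
    (PosDef.one.smul hγ)

theorem add_sq_le_dotProduct_regularizedFisher_mulVec (g : ι → n → ℝ) (γ : ℝ) (z : ι)
    (w : n → ℝ) : γ * (w ⬝ᵥ w) + (g z ⬝ᵥ w) ^ 2 ≤ w ⬝ᵥ (regularizedFisher g γ *ᵥ w) := by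
  rw [dotProduct_regularizedFisher_mulVec]
  linarith [Finset.single_le_sum (fun z _ => sq_nonneg (g z ⬝ᵥ w)) (Finset.mem_univ z)]
end

section
variable {n : Type*} [Fintype n]

theorem dotProduct_self_nonneg {R : Type*} [Ring R] [LinearOrder R] [IsStrictOrderedRing R]
    (v : n → R) : 0 ≤ v ⬝ᵥ v :=
  Finset.sum_nonneg fun i _ => mul_self_nonneg (v i)

/-- The right side is `vᵀ (γ I + u uᵀ)⁻¹ v` (Sherman–Morrison), the maximum of the left side
over `w`. -/
theorem two_mul_dotProduct_sub_le {γ : ℝ} (hγ : 0 < γ) (u v w : n → ℝ) :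
    2 * (v ⬝ᵥ w) - γ * (w ⬝ᵥ w) - (u ⬝ᵥ w) ^ 2
      ≤ v ⬝ᵥ v / γ - (u ⬝ᵥ v) ^ 2 / (γ * (γ + u ⬝ᵥ u)) := by
  have hγu : 0 < γ + u ⬝ᵥ u := add_pos_of_pos_of_nonneg hγ (dotProduct_self_nonneg u)
  set t := u ⬝ᵥ v / (γ + u ⬝ᵥ u)
  set r := γ • w - v + t • u
  have hgap : v ⬝ᵥ v / γ - (u ⬝ᵥ v) ^ 2 / (γ * (γ + u ⬝ᵥ u))
      - (2 * (v ⬝ᵥ w) - γ * (w ⬝ᵥ w) - (u ⬝ᵥ w) ^ 2) = r ⬝ᵥ r / γ + (u ⬝ᵥ w - t) ^ 2 := by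
    simp only [r, t, add_dotProduct, dotProduct_add, sub_dotProduct, dotProduct_sub,
      smul_dotProduct, dotProduct_smul, smul_eq_mul, dotProduct_comm w, dotProduct_comm v u]
    field_simp
    ring
  linarith [div_nonneg (dotProduct_self_nonneg r) hγ.le, sq_nonneg (u ⬝ᵥ w - t)]

variable [DecidableEq n]

theorem dotProduct_inv_mulVec_le {A : Matrix n n ℝ} (hA : IsUnit A) {γ : ℝ} (hγ : 0 < γ)
    (u : n → ℝ) (hAu : ∀ w, γ * (w ⬝ᵥ w) + (u ⬝ᵥ w) ^ 2 ≤ w ⬝ᵥ (A *ᵥ w)) (v : n → ℝ) :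
    v ⬝ᵥ (A⁻¹ *ᵥ v) ≤ v ⬝ᵥ v / γ - (u ⬝ᵥ v) ^ 2 / (γ * (γ + u ⬝ᵥ u)) := by
  set w := A⁻¹ *ᵥ v
  have hw : A *ᵥ w = v := by
    rw [mulVec_mulVec, mul_nonsing_inv _ ((isUnit_iff_isUnit_det A).mp hA), one_mulVec]
  have := two_mul_dotProduct_sub_le hγ u v w
  have := hAu w
  rw [hw, dotProduct_comm w v] at this
  linarith
end

theorem two_mul_sq_sub_le_two_mul_inner {E : Type*} [NormedAddCommGroup E] [InnerProductSpace ℝ E]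
    {x y : E} {m τ : ℝ} (hm : 0 ≤ m) (hx : m ≤ ‖x‖) (hy : m ≤ ‖y‖) (hxy : ‖x - y‖ ^ 2 ≤ τ) :
    2 * m ^ 2 - τ ≤ 2 * inner ℝ x y := by
  rw [norm_sub_sq_real] at hxy
  nlinarith [pow_le_pow_left₀ hm hx 2, pow_le_pow_left₀ hm hy 2]

theorem iSup_exp_neg_mul_le {ι : Type*} (f : ι → ℝ) (hf : ∀ z, 0 ≤ f z) {lam : ℝ} (hlam : 0 ≤ lam)
    (τ : ℝ) [Decidable (∃ z, f z ≤ τ)] :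
    ⨆ z, Real.exp (-lam * f z)
      ≤ Real.exp (-lam * τ) + (1 - Real.exp (-lam * τ)) * if ∃ z, f z ≤ τ then 1 else 0 := by
  split_ifs with hcov
  · refine Real.iSup_le (fun z => ?_) zero_le_one |>.trans_eq (by ring)
    exact Real.exp_le_one_iff.mpr (by nlinarith [hf z])
  · push Not at hcov
    refine Real.iSup_le (fun z => ?_) (Real.exp_pos _).le |>.trans_eq (by ring)
    exact Real.exp_le_exp.mpr (by nlinarith [hcov z])

theorem sum_le_card_mul_sub_mul_div {κ : Type*} [Fintype κ] {G U c : κ → ℝ} {a Δ e : ℝ}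
    (hΔ : 0 ≤ Δ) (he : e < 1) (hG : ∀ x, G x ≤ a - Δ * c x) (hU : ∀ x, U x ≤ e + (1 - e) * c x) :
    ∑ x, G x ≤ Fintype.card κ * a - Δ * ((∑ x, U x - Fintype.card κ * e) / (1 - e)) := by
  have hGsum : ∑ x, G x ≤ Fintype.card κ * a - Δ * ∑ x, c x :=
    (Finset.sum_le_sum fun x _ => hG x).trans_eq <| by
      rw [Finset.sum_sub_distrib, Finset.sum_const, Finset.card_univ, nsmul_eq_mul, Finset.mul_sum]
  have hUsum : ∑ x, U x ≤ Fintype.card κ * e + (1 - e) * ∑ x, c x :=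
    (Finset.sum_le_sum fun x _ => hU x).trans_eq <| by
      rw [Finset.sum_add_distrib, Finset.sum_const, Finset.card_univ, nsmul_eq_mul, Finset.mul_sum]
  have hc : (∑ x, U x - Fintype.card κ * e) / (1 - e) ≤ ∑ x, c x := by
    rw [div_le_iff₀ (sub_pos.mpr he)]
    linarith
  nlinarith [mul_le_mul_of_nonneg_left hc hΔ]

theorem EuclideanSpace.real_inner_eq_dotProduct {n : Type*} [Fintype n] (x y : EuclideanSpace ℝ n) :
    inner ℝ x y = WithLp.ofLp x ⬝ᵥ WithLp.ofLp y := by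
  simp [EuclideanSpace.inner_eq_star_dotProduct, dotProduct_comm]

open WithLp in
theorem ofLp_dotProduct_regularizedFisher_inv_mulVec_le {n ι : Type*} [Fintype n] [DecidableEq n]
    [Fintype ι] (g : ι → EuclideanSpace ℝ n) (v : EuclideanSpace ℝ n) {γ L m τ : ℝ} (hγ : 0 < γ)
    (hm : 0 ≤ m) (hτ : τ ≤ 2 * m ^ 2) (hvL : ‖v‖ ≤ L) (hvm : m ≤ ‖v‖) (hgL : ∀ z, ‖g z‖ ≤ L)
    (hgm : ∀ z, m ≤ ‖g z‖) [Decidable (∃ z, ‖v - g z‖ ^ 2 ≤ τ)] :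
    ofLp v ⬝ᵥ ((regularizedFisher (fun z => ofLp (g z)) γ)⁻¹ *ᵥ ofLp v)
      ≤ L ^ 2 / γ - (2 * m ^ 2 - τ) ^ 2 / (4 * γ ^ 2 * (1 + L ^ 2 / γ)) *
          if ∃ z, ‖v - g z‖ ^ 2 ≤ τ then 1 else 0 := by
  have hA := (regularizedFisher_posDef (fun z => ofLp (g z)) hγ).isUnit
  have hv : ofLp v ⬝ᵥ ofLp v / γ ≤ L ^ 2 / γ := by
    rw [← EuclideanSpace.real_inner_eq_dotProduct, real_inner_self_eq_norm_sq]
    gcongr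
  split_ifs with hcov
  · obtain ⟨z, hz⟩ := hcov
    have hfisher := dotProduct_inv_mulVec_le hA hγ (ofLp (g z))
      (add_sq_le_dotProduct_regularizedFisher_mulVec (fun z => ofLp (g z)) γ z) (ofLp v)
    have hinner := two_mul_sq_sub_le_two_mul_inner hm hvm (hgm z) hz
    have hgz : ofLp (g z) ⬝ᵥ ofLp (g z) ≤ L ^ 2 := by
      rw [← EuclideanSpace.real_inner_eq_dotProduct, real_inner_self_eq_norm_sq]
      exact pow_le_pow_left₀ (norm_nonneg _) (hgL z) 2
    rw [EuclideanSpace.real_inner_eq_dotProduct, dotProduct_comm] at hinner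
    have hgain : (2 * m ^ 2 - τ) ^ 2 / (4 * γ ^ 2 * (1 + L ^ 2 / γ))
        ≤ (ofLp (g z) ⬝ᵥ ofLp v) ^ 2 / (γ * (γ + ofLp (g z) ⬝ᵥ ofLp (g z))) := by
      rw [show 4 * γ ^ 2 * (1 + L ^ 2 / γ) = 4 * (γ * (γ + L ^ 2)) by field_simp, ← div_div]
      have hgz0 := dotProduct_self_nonneg (ofLp (g z))
      refine div_le_div₀ (sq_nonneg _) ?_ (by positivity) (by gcongr)
      nlinarith
    linarith
  · have hfisher := dotProduct_inv_mulVec_le hA hγ 0 (fun w => by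
      rw [dotProduct_regularizedFisher_mulVec]
      simp [Finset.sum_nonneg, sq_nonneg]) (ofLp v)
    norm_num at hfisher ⊢
    exact hfisher.trans hv

theorem regularized_fisher_coverage_general
    (d k : ℕ)
    (gval : Fin k → EuclideanSpace ℝ (Fin d))
    (ι : Type) [Fintype ι]
    (gS : ι → EuclideanSpace ℝ (Fin d))
    (γ lam L m : ℝ) (hγ : 0 < γ) (hlam : 0 < lam) (hm : 0 < m)
    (hL_val : ∀ x : Fin k, ‖gval x‖ ≤ L) (hL_S : ∀ z : ι, ‖gS z‖ ≤ L)
    (hm_val : ∀ x : Fin k, m ≤ ‖gval x‖) (hm_S : ∀ z : ι, m ≤ ‖gS z‖)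
    (τ : ℝ) (hτ0 : 0 < τ) (hτ2 : τ ≤ 2 * m ^ 2) :
    (∑ x : Fin k,
        gval x ⬝ᵥ
          ((∑ z : ι, vecMulVec (gS z) (gS z) + γ • (1 : Matrix (Fin d) (Fin d) ℝ))⁻¹ *ᵥ
            gval x))
      ≤ (k : ℝ) * L ^ 2 / γ
        - (2 * m ^ 2 - τ) ^ 2 / (4 * γ ^ 2 * (1 + L ^ 2 / γ)) *
            (((∑ x : Fin k, ⨆ z : ι, Real.exp (-lam * ‖gval x - gS z‖ ^ 2))
                - (k : ℝ) * Real.exp (-lam * τ)) / (1 - Real.exp (-lam * τ))) := by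
  classical
  have hbound := sum_le_card_mul_sub_mul_div (by positivity)
    (Real.exp_lt_one_iff.mpr (by nlinarith))
    (fun x => ofLp_dotProduct_regularizedFisher_inv_mulVec_le gS (gval x) hγ hm.le hτ2
      (hL_val x) (hm_val x) hL_S hm_S)
    (fun x => iSup_exp_neg_mul_le (fun z => ‖gval x - gS z‖ ^ 2) (fun _ => by positivity)
      hlam.le τ)
  rw [mul_div_assoc]
  simpa [regularizedFisher] using hbound

/-- **Regularized Fisher–Coverage Relationship.**
`gval : Fin k → ℝ^d` are the validation gradients, `gS : ι → ℝ^d` (for a nonempty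
finite index type `ι`) are the selected gradients.  The regularized empirical Fisher is
`I_γ(S) = ∑_z g(z) g(z)ᵀ + γ I`, the regularized total uncertainty is
`G_γ(S) = ∑_x g(x)ᵀ I_γ(S)⁻¹ g(x)`, and the gradient-coverage surrogate is
`U_λ(S) = ∑_x max_z exp (-λ ‖g(x) - g(z)‖²)`.  Under bounded (`≤ L`) and
non-degenerate (`≥ m > 0`) gradient norms, for every threshold `τ ∈ (0, 2m²]`,
`G_γ(S) ≤ k L²/γ - ((2m² - τ)² / (4γ²(1 + L²/γ))) · (U_λ(S) - k e^{-λτ})/(1 - e^{-λτ})`. -/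
theorem regularized_fisher_coverage
    (d k : ℕ) (hd : 0 < d) (hk : 0 < k)
    (gval : Fin k → EuclideanSpace ℝ (Fin d))
    (ι : Type) [Fintype ι] [Nonempty ι]
    (gS : ι → EuclideanSpace ℝ (Fin d))
    (γ lam L m : ℝ) (hγ : 0 < γ) (hlam : 0 < lam) (hm : 0 < m)
    (hL_val : ∀ x : Fin k, ‖gval x‖ ≤ L) (hL_S : ∀ z : ι, ‖gS z‖ ≤ L)
    (hm_val : ∀ x : Fin k, m ≤ ‖gval x‖) (hm_S : ∀ z : ι, m ≤ ‖gS z‖)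
    (τ : ℝ) (hτ0 : 0 < τ) (hτ2 : τ ≤ 2 * m ^ 2) :
    (∑ x : Fin k,
        gval x ⬝ᵥ
          ((∑ z : ι, vecMulVec (gS z) (gS z) + γ • (1 : Matrix (Fin d) (Fin d) ℝ))⁻¹ *ᵥ
            gval x))
      ≤ (k : ℝ) * L ^ 2 / γ
        - (2 * m ^ 2 - τ) ^ 2 / (4 * γ ^ 2 * (1 + L ^ 2 / γ)) *
            (((∑ x : Fin k, ⨆ z : ι, Real.exp (-lam * ‖gval x - gS z‖ ^ 2))
                - (k : ℝ) * Real.exp (-lam * τ)) / (1 - Real.exp (-lam * τ))) :=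
  regularized_fisher_coverage_general d k gval ι gS γ lam L m hγ hlam hm hL_val hL_S hm_val hm_S τ
    hτ0 hτ2
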